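/- The order-4 Thue-Morse autocorrelation satisfies the recursion η(m,n,k) = ((-1)^{m+n+k}/2)·(η(⌊m/2⌋,⌊n/2⌋,⌊k/2⌋) + η(⌈m/2⌉,⌈n/2⌉,⌈k/2⌉)) for all m, n, k ∈ ℕ. -/
import Mathlib


open Filter Finset

/-- Binary digit-sum of `n`. -/
def digitSum (n : ℕ) : ℕ := (Nat.digits 2 n).sum

/-- The Thue-Morse sign sequence `σ(n) = (-1)^{s(n)}`. -/
def tmSign (n : ℕ) : ℤ := (-1) ^ digitSum n

lemma digitSum_two_mul (n : ℕ) : digitSum (2 * n) = digitSum n := by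
  rcases Nat.eq_zero_or_pos n with h | h
  · simp [h]
  · unfold digitSum
    rw [Nat.digits_def' (by norm_num : 1 < 2) (by omega)]
    simp [Nat.mul_div_cancel_left _ (by norm_num : 0 < 2)]

lemma digitSum_two_mul_add_one (n : ℕ) : digitSum (2 * n + 1) = digitSum n + 1 := by
  unfold digitSum
  rw [Nat.digits_def' (by norm_num : 1 < 2) (by omega)]
  have h1 : (2 * n + 1) % 2 = 1 := by omega
  have h2 : (2 * n + 1) / 2 = n := by omega
  rw [h1, h2]
  simp [Nat.add_comm]

lemma tmSign_two_mul (n : ℕ) : tmSign (2 * n) = tmSign n := by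
  unfold tmSign; rw [digitSum_two_mul]

lemma tmSign_two_mul_add_one (n : ℕ) : tmSign (2 * n + 1) = -tmSign n := by
  unfold tmSign; rw [digitSum_two_mul_add_one, pow_succ]; ring

lemma tmSign_even_shift (i m : ℕ) :
    tmSign (2 * i + m) = (-1) ^ m * tmSign (i + m / 2) := by
  rcases Nat.even_or_odd m with ⟨a, rfl⟩ | ⟨a, rfl⟩
  · have h1 : 2 * i + (a + a) = 2 * (i + a) := by ring
    have h2 : (a + a) / 2 = a := by omega
    rw [h1, h2, tmSign_two_mul, Even.neg_one_pow ⟨a, rfl⟩, one_mul]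
  · have h1 : 2 * i + (2 * a + 1) = 2 * (i + a) + 1 := by ring
    have h2 : (2 * a + 1) / 2 = a := by omega
    rw [h1, h2, tmSign_two_mul_add_one, Odd.neg_one_pow ⟨a, rfl⟩]
    ring

lemma tmSign_odd_shift (i m : ℕ) :
    tmSign (2 * i + 1 + m) = (-1) ^ (m + 1) * tmSign (i + (m + 1) / 2) := by
  rcases Nat.even_or_odd m with ⟨a, rfl⟩ | ⟨a, rfl⟩
  · have h1 : 2 * i + 1 + (a + a) = 2 * (i + a) + 1 := by ring
    have h2 : (a + a + 1) / 2 = a := by omega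
    rw [h1, h2, tmSign_two_mul_add_one, Odd.neg_one_pow ⟨a, by ring⟩]
    ring
  · have h1 : 2 * i + 1 + (2 * a + 1) = 2 * (i + a + 1) := by ring
    have h2 : (2 * a + 1 + 1) / 2 = a + 1 := by omega
    rw [h1, h2, tmSign_two_mul, Even.neg_one_pow ⟨a + 1, by ring⟩, one_mul]
    rw [Nat.add_assoc]

lemma sum_range_two_mul (f : ℕ → ℝ) (N : ℕ) :
    ∑ i ∈ range (2 * N), f i
      = ∑ i ∈ range N, f (2 * i) + ∑ i ∈ range N, f (2 * i + 1) := by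
  induction N with
  | zero => simp
  | succ n ih =>
      rw [show 2 * (n + 1) = 2 * n + 1 + 1 by ring, sum_range_succ, sum_range_succ,
        ih, sum_range_succ, sum_range_succ]
      ring

/-- The order-4 Thue-Morse autocorrelation satisfies the recursion
`η(m,n,k) = ((-1)^{m+n+k}/2)(η(⌊m/2⌋,⌊n/2⌋,⌊k/2⌋) + η(⌈m/2⌉,⌈n/2⌉,⌈k/2⌉))`. -/
theorem tm_autocorrelation4_recursion (η₄ : ℕ → ℕ → ℕ → ℝ)
    (hη₄ : ∀ m n k : ℕ, Tendsto
      (fun N : ℕ => (1 / (N : ℝ)) * ∑ i ∈ range N,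
        (tmSign i : ℝ) * (tmSign (i + m) : ℝ) * (tmSign (i + n) : ℝ) * (tmSign (i + k) : ℝ))
      atTop (nhds (η₄ m n k))) :
    ∀ m n k : ℕ, η₄ m n k =
      ((-1 : ℝ) ^ (m + n + k) / 2) *
        (η₄ (m / 2) (n / 2) (k / 2) + η₄ ((m + 1) / 2) ((n + 1) / 2) ((k + 1) / 2)) := by
  intro m n k
  set F : ℕ → ℕ → ℕ → ℕ → ℝ := fun m n k i =>
    (tmSign i : ℝ) * (tmSign (i + m) : ℝ) * (tmSign (i + n) : ℝ) * (tmSign (i + k) : ℝ)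
    with hF
  set c : ℝ := (-1 : ℝ) ^ (m + n + k) with hc
  have hFeven : ∀ i, F m n k (2 * i) = c * F (m / 2) (n / 2) (k / 2) i := by
    intro i
    simp only [hF, hc]
    have e0 := tmSign_even_shift i 0
    have em := tmSign_even_shift i m
    have en := tmSign_even_shift i n
    have ek := tmSign_even_shift i k
    simp only [Nat.add_zero, Nat.zero_div, pow_zero, one_mul] at e0
    rw [show 2 * i = 2 * i + 0 by ring] at e0 ⊢
    rw [show 2 * i + 0 + m = 2 * i + m by ring, show 2 * i + 0 + n = 2 * i + n by ring,
      show 2 * i + 0 + k = 2 * i + k by ring, e0, em, en, ek]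
    push_cast
    rw [pow_add, pow_add]
    ring
  have hFodd : ∀ i, F m n k (2 * i + 1) = c * F ((m + 1) / 2) ((n + 1) / 2) ((k + 1) / 2) i := by
    intro i
    simp only [hF, hc]
    have e0 : tmSign (2 * i + 1) = -tmSign i := tmSign_two_mul_add_one i
    have em := tmSign_odd_shift i m
    have en := tmSign_odd_shift i n
    have ek := tmSign_odd_shift i k
    rw [e0, em, en, ek]
    push_cast
    have hm : ((-1 : ℝ)) ^ (m + 1) = -(-1 : ℝ) ^ m := by rw [pow_succ]; ring
    have hn : ((-1 : ℝ)) ^ (n + 1) = -(-1 : ℝ) ^ n := by rw [pow_succ]; ring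
    have hk : ((-1 : ℝ)) ^ (k + 1) = -(-1 : ℝ) ^ k := by rw [pow_succ]; ring
    rw [hm, hn, hk]
    ring
  -- limit along even N
  have hmono : StrictMono (fun N : ℕ => 2 * N) := by
    intro a b hab; dsimp only; omega
  have h1 : Tendsto (fun N : ℕ => (1 / ((2 * N : ℕ) : ℝ)) * ∑ i ∈ range (2 * N), F m n k i)
      atTop (nhds (η₄ m n k)) := (hη₄ m n k).comp hmono.tendsto_atTop
  have heq : (fun N : ℕ => (1 / ((2 * N : ℕ) : ℝ)) * ∑ i ∈ range (2 * N), F m n k i)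
      = fun N : ℕ => (c / 2) *
        ((1 / (N : ℝ)) * ∑ i ∈ range N, F (m / 2) (n / 2) (k / 2) i
          + (1 / (N : ℝ)) * ∑ i ∈ range N, F ((m + 1) / 2) ((n + 1) / 2) ((k + 1) / 2) i) := by
    funext N
    rw [sum_range_two_mul]
    rw [Finset.sum_congr rfl (fun i _ => hFeven i), Finset.sum_congr rfl (fun i _ => hFodd i)]
    rw [← Finset.mul_sum, ← Finset.mul_sum]
    push_cast
    rcases Nat.eq_zero_or_pos N with h | h
    · simp [h]
    · have hN : (N : ℝ) ≠ 0 := Nat.cast_ne_zero.mpr (by omega)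
      field_simp
  rw [heq] at h1
  have h2 : Tendsto (fun N : ℕ => (c / 2) *
        ((1 / (N : ℝ)) * ∑ i ∈ range N, F (m / 2) (n / 2) (k / 2) i
          + (1 / (N : ℝ)) * ∑ i ∈ range N, F ((m + 1) / 2) ((n + 1) / 2) ((k + 1) / 2) i))
      atTop (nhds ((c / 2) * (η₄ (m / 2) (n / 2) (k / 2)
          + η₄ ((m + 1) / 2) ((n + 1) / 2) ((k + 1) / 2)))) :=
    Tendsto.const_mul _ ((hη₄ (m / 2) (n / 2) (k / 2)).add
      (hη₄ ((m + 1) / 2) ((n + 1) / 2) ((k + 1) / 2)))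
  exact tendsto_nhds_unique h1 h2
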